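/- Let p be a prime and let (I, J) be an admissible index-pair for R(F_p). If J is nonempty, then J is infinite. (Consequently, if R(I,J) is just infinite then I or J must be the empty set.) -/

import Mathlib

/-!
If `J` is finite with maximum `m ≥ 1`, the Riordan element `a = (1, g)` with `g = x + x^{m+1}` lies
in `R(I,J)`. Its square has second component `g ∘ g = g + g^{m+1}`, whose coefficient of
`x^{(m+1)^2}` is the leading coefficient `1` of `g^{m+1}`; since `(m+1)^2 = j + 1` with
`j = m(m+2) > m`, this forces `j ∈ J`. That `a` is a unit follows from the existence of right
inverses in the Riordan monoid, obtained from left compositional inverses.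
-/

open PowerSeries Finset

namespace RiordanPaper

variable {K : Type*} [CommRing K]

noncomputable def comp (f g : PowerSeries K) : PowerSeries K :=
  PowerSeries.mk fun n => ∑ d ∈ Finset.range (n + 1), coeff d f * coeff n (g ^ d)

lemma coeff_comp (f g : PowerSeries K) (n : ℕ) :
    coeff n (comp f g) = ∑ d ∈ Finset.range (n + 1), coeff d f * coeff n (g ^ d) := by
  simp [comp]

lemma coeff_pow_eq_zero {g : PowerSeries K} (hg : constantCoeff g = 0) {n d : ℕ}
    (h : n < d) : coeff n (g ^ d) = 0 := by
  have hdvd : (X : PowerSeries K) ^ d ∣ g ^ d :=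
    pow_dvd_pow_of_dvd (PowerSeries.X_dvd_iff.2 hg) d
  exact (PowerSeries.X_pow_dvd_iff.1 hdvd) n h

lemma coeff_comp_of_lt {g : PowerSeries K} (hg : constantCoeff g = 0)
    (f : PowerSeries K) {n N : ℕ} (hn : n < N) :
    coeff n (comp f g) = ∑ d ∈ Finset.range N, coeff d f * coeff n (g ^ d) := by
  rw [coeff_comp]
  apply Finset.sum_subset
  · intro d hd
    simp only [Finset.mem_range] at hd ⊢
    omega
  · intro d _ hd'
    simp only [Finset.mem_range] at hd'
    rw [coeff_pow_eq_zero hg (by omega), mul_zero]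

lemma coeff_eval₂ {g : PowerSeries K} (hg : constantCoeff g = 0)
    (P : Polynomial K) (n : ℕ) :
    coeff n (Polynomial.eval₂ C g P)
      = ∑ d ∈ Finset.range (n + 1), P.coeff d * coeff n (g ^ d) := by
  classical
  have h1 : P.natDegree < max (n + 1) (P.natDegree + 1) :=
    lt_of_lt_of_le (Nat.lt_succ_self _) (le_max_right _ _)
  rw [Polynomial.eval₂_eq_sum_range' C h1 g, map_sum]
  have h2 : ∀ d ∈ Finset.range (max (n + 1) (P.natDegree + 1)),
      coeff n (C (P.coeff d) * g ^ d) = P.coeff d * coeff n (g ^ d) := fun d _ => by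
    rw [coeff_C_mul]
  rw [Finset.sum_congr rfl h2]
  symm
  apply Finset.sum_subset
  · intro d hd
    simp only [Finset.mem_range] at hd ⊢
    omega
  · intro d _ hd'
    simp only [Finset.mem_range] at hd'
    rw [coeff_pow_eq_zero hg (by omega), mul_zero]

lemma coeff_comp_eq_eval₂_trunc {g : PowerSeries K} (hg : constantCoeff g = 0)
    (f : PowerSeries K) {n N : ℕ} (hn : n < N) :
    coeff n (comp f g) = coeff n (Polynomial.eval₂ C g (trunc N f)) := by
  rw [coeff_eval₂ hg, coeff_comp]
  apply Finset.sum_congr rfl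
  intro d hd
  simp only [Finset.mem_range] at hd
  rw [PowerSeries.coeff_trunc, if_pos (by omega)]

lemma mul_comp {g : PowerSeries K} (hg : constantCoeff g = 0) (f₁ f₂ : PowerSeries K) :
    comp (f₁ * f₂) g = comp f₁ g * comp f₂ g := by
  ext n
  have key : coeff n (comp (f₁ * f₂) g)
      = coeff n (Polynomial.eval₂ C g (trunc (n + 1) f₁ * trunc (n + 1) f₂)) := by
    rw [coeff_eval₂ hg, coeff_comp]
    apply Finset.sum_congr rfl
    intro d hd
    simp only [Finset.mem_range] at hd
    congr 1
    rw [Polynomial.coeff_mul, PowerSeries.coeff_mul]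
    apply Finset.sum_congr rfl
    intro ab hab
    rw [Finset.HasAntidiagonal.mem_antidiagonal] at hab
    rw [PowerSeries.coeff_trunc, PowerSeries.coeff_trunc, if_pos (by omega), if_pos (by omega)]
  rw [key, Polynomial.eval₂_mul, PowerSeries.coeff_mul, PowerSeries.coeff_mul]
  apply Finset.sum_congr rfl
  intro ab hab
  rw [Finset.HasAntidiagonal.mem_antidiagonal] at hab
  rw [← coeff_comp_eq_eval₂_trunc hg f₁ (show ab.1 < n + 1 by omega),
    ← coeff_comp_eq_eval₂_trunc hg f₂ (show ab.2 < n + 1 by omega)]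

lemma one_comp (g : PowerSeries K) : comp (1 : PowerSeries K) g = 1 := by
  ext n
  rw [coeff_comp, Finset.sum_eq_single 0]
  · simp
  · intro d _ hd0
    simp [PowerSeries.coeff_one, hd0]
  · intro h
    simp at h

lemma comp_X (f : PowerSeries K) : comp f X = f := by
  ext n
  rw [coeff_comp, Finset.sum_eq_single n]
  · rw [coeff_X_pow, if_pos rfl, mul_one]
  · intro d _ hdn
    rw [coeff_X_pow, if_neg (fun h => hdn h.symm), mul_zero]
  · intro h
    simp at h

lemma X_comp {g : PowerSeries K} (hg : constantCoeff g = 0) : comp X g = g := by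
  ext n
  rcases Nat.eq_zero_or_pos n with hn | hn
  · subst hn
    rw [coeff_comp]
    simp [PowerSeries.coeff_X, coeff_zero_eq_constantCoeff_apply, hg]
  · rw [coeff_comp, Finset.sum_eq_single 1]
    · rw [coeff_one_X, pow_one, one_mul]
    · intro d _ hd1
      rw [PowerSeries.coeff_X, if_neg hd1, zero_mul]
    · intro h
      simp only [Finset.mem_range] at h
      omega

lemma constantCoeff_comp (f g : PowerSeries K) :
    constantCoeff (comp f g) = constantCoeff f := by
  rw [← coeff_zero_eq_constantCoeff_apply, coeff_comp]
  simp

lemma coeff_one_comp (f g : PowerSeries K) :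
    coeff 1 (comp f g) = coeff 1 f * coeff 1 g := by
  rw [coeff_comp]
  have : Finset.range 2 = {0, 1} := rfl
  rw [this, Finset.sum_insert (by simp), Finset.sum_singleton, pow_zero, pow_one]
  simp [PowerSeries.coeff_one]

lemma comp_assoc {g k : PowerSeries K} (hg : constantCoeff g = 0)
    (hk : constantCoeff k = 0) (f : PowerSeries K) :
    comp (comp f g) k = comp f (comp g k) := by
  have hpow : ∀ e : ℕ, (comp g k) ^ e = comp (g ^ e) k := by
    intro e
    induction e with
    | zero => simp [one_comp]
    | succ m ih => rw [pow_succ, pow_succ, ih, mul_comp hk]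
  ext n
  rw [coeff_comp, coeff_comp]
  have L1 : ∀ d ∈ Finset.range (n + 1), coeff d (comp f g) * coeff n (k ^ d)
      = ∑ e ∈ Finset.range (n + 1), coeff e f * coeff d (g ^ e) * coeff n (k ^ d) := by
    intro d hd
    simp only [Finset.mem_range] at hd
    rw [coeff_comp_of_lt hg f hd, Finset.sum_mul]
  rw [Finset.sum_congr rfl L1, Finset.sum_comm]
  apply Finset.sum_congr rfl
  intro e _
  rw [hpow e, coeff_comp, Finset.mul_sum]
  apply Finset.sum_congr rfl
  intro d _
  ring

/-- An element of the Riordan group: a pair `(h, g)` with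
`h = 1 + a₁x + ⋯` and `g = x + b₂x² + ⋯`. -/
@[ext]
structure RiordanElem (K : Type*) [CommRing K] where
  h : PowerSeries K
  g : PowerSeries K
  h_zero : constantCoeff h = 1
  g_zero : constantCoeff g = 0
  g_one : coeff 1 g = 1

namespace RiordanElem

noncomputable instance : Mul (RiordanElem K) :=
  ⟨fun a b => ⟨a.h * comp b.h a.g, comp b.g a.g,
    by rw [map_mul, a.h_zero, one_mul, constantCoeff_comp, b.h_zero],
    by rw [constantCoeff_comp, b.g_zero],
    by rw [coeff_one_comp, b.g_one, a.g_one, one_mul]⟩⟩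

noncomputable instance : One (RiordanElem K) :=
  ⟨⟨1, X, map_one _, constantCoeff_X, coeff_one_X⟩⟩

@[simp] lemma mul_h (a b : RiordanElem K) : (a * b).h = a.h * comp b.h a.g := rfl
@[simp] lemma mul_g (a b : RiordanElem K) : (a * b).g = comp b.g a.g := rfl
@[simp] lemma one_h : (1 : RiordanElem K).h = 1 := rfl
@[simp] lemma one_g : (1 : RiordanElem K).g = X := rfl

noncomputable instance instMonoid : Monoid (RiordanElem K) where
  mul_assoc a b c := by
    ext1
    · show (a.h * comp b.h a.g) * comp c.h (comp b.g a.g)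
        = a.h * comp (b.h * comp c.h b.g) a.g
      rw [mul_comp a.g_zero, ← comp_assoc b.g_zero a.g_zero, mul_assoc]
    · show comp c.g (comp b.g a.g) = comp (comp c.g b.g) a.g
      rw [comp_assoc b.g_zero a.g_zero]
  one_mul a := by
    ext1
    · show (1 : PowerSeries K) * comp a.h X = a.h
      rw [comp_X, one_mul]
    · show comp a.g X = a.g
      exact comp_X a.g
  mul_one a := by
    ext1
    · show a.h * comp 1 a.g = a.h
      rw [one_comp, mul_one]
    · show comp X a.g = a.g
      exact X_comp a.g_zero

end RiordanElem

/-- The Riordan group over `K`, realized as the units of the Riordan monoid. -/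
noncomputable abbrev RiordanGroup (K : Type*) [CommRing K] := (RiordanElem K)ˣ

/-- An element of the Nottingham group: `g = x + b₂x² + ⋯`. -/
@[ext]
structure NottinghamElem (K : Type*) [CommRing K] where
  g : PowerSeries K
  g_zero : constantCoeff g = 0
  g_one : coeff 1 g = 1

namespace NottinghamElem

noncomputable instance : Mul (NottinghamElem K) :=
  ⟨fun a b => ⟨comp b.g a.g,
    by rw [constantCoeff_comp, b.g_zero],
    by rw [coeff_one_comp, b.g_one, a.g_one, one_mul]⟩⟩

noncomputable instance : One (NottinghamElem K) :=
  ⟨⟨X, constantCoeff_X, coeff_one_X⟩⟩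

@[simp] lemma mul_g (a b : NottinghamElem K) : (a * b).g = comp b.g a.g := rfl
@[simp] lemma one_g : (1 : NottinghamElem K).g = X := rfl

noncomputable instance instMonoid : Monoid (NottinghamElem K) where
  mul_assoc a b c := by
    ext1
    show comp c.g (comp b.g a.g) = comp (comp c.g b.g) a.g
    rw [comp_assoc b.g_zero a.g_zero]
  one_mul a := by
    ext1
    show comp a.g X = a.g
    exact comp_X a.g
  mul_one a := by
    ext1
    show comp X a.g = a.g
    exact X_comp a.g_zero

end NottinghamElem

/-- The Nottingham group over `K`, realized as the units of the Nottingham monoid. -/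
noncomputable abbrev NottinghamGroup (K : Type*) [CommRing K] := (NottinghamElem K)ˣ


/-- The subset `R(I,J) = H(I) ⋊ N(J)` of the Riordan group over `F_p`:
pairs `(h, g)` with `h = 1 + ∑_{i ∈ I} aᵢ xⁱ` and `g = x + ∑_{j ∈ J} bⱼ x^{j+1}`. -/
def RIJ (p : ℕ) (I J : Set ℕ) : Set (RiordanGroup (ZMod p)) :=
  {u | (∀ i, 0 < i → i ∉ I → coeff i ((u : RiordanElem (ZMod p)).h) = 0) ∧
       (∀ j, 0 < j → j ∉ J → coeff (j + 1) ((u : RiordanElem (ZMod p)).g) = 0)}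

/-- `(I, J)` is an admissible index-pair: `R(I,J)` is a subgroup of `R(F_p)`. -/
def IsAdmissible (p : ℕ) (I J : Set ℕ) : Prop :=
  ∃ S : Subgroup (RiordanGroup (ZMod p)), (S : Set (RiordanGroup (ZMod p))) = RIJ p I J

lemma add_comp (f₁ f₂ g : PowerSeries K) : comp (f₁ + f₂) g = comp f₁ g + comp f₂ g := by
  ext n
  simp only [coeff_comp, map_add, add_mul, sum_add_distrib]

lemma X_pow_comp {g : PowerSeries K} (hg : constantCoeff g = 0) (k : ℕ) :
    comp (X ^ k) g = g ^ k := by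
  induction k with
  | zero => rw [pow_zero, pow_zero, one_comp]
  | succ k ih => rw [pow_succ, pow_succ, mul_comp hg, ih, X_comp hg]

lemma coeff_pow_self {g : PowerSeries K} (hg : constantCoeff g = 0) (n : ℕ) :
    coeff n (g ^ n) = coeff 1 g ^ n := by
  obtain ⟨q, rfl⟩ := PowerSeries.X_dvd_iff.2 hg
  rw [mul_pow, coeff_X_pow_mul', if_pos le_rfl, Nat.sub_self, coeff_zero_eq_constantCoeff,
    map_pow, ← coeff_zero_eq_constantCoeff_apply, coeff_succ_X_mul]

/- As `coeff n (g ^ n) = 1` and `coeff n (g ^ d) = 0` for `d > n`, the `n`-th coefficient of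
`comp f g` is `f n` plus terms in the `f d` with `d < n`; this triangular system is solved for
`comp f g = X`. -/
noncomputable def compLeftInvCoeff (g : PowerSeries K) (n : ℕ) : K :=
  (if n = 1 then 1 else 0) - ∑ d : Fin n, compLeftInvCoeff g d * coeff n (g ^ (d : ℕ))

noncomputable def compLeftInv (g : PowerSeries K) : PowerSeries K :=
  PowerSeries.mk (compLeftInvCoeff g)

lemma compLeftInv_comp {g : PowerSeries K} (hg0 : constantCoeff g = 0) (hg1 : coeff 1 g = 1) :
    comp (compLeftInv g) g = X := by
  ext n
  rw [coeff_comp, sum_range_succ, coeff_pow_self hg0, hg1, one_pow, mul_one, coeff_X]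
  simp only [compLeftInv, coeff_mk]
  rw [compLeftInvCoeff,
    Fin.sum_univ_eq_sum_range (fun d => compLeftInvCoeff g d * coeff n (g ^ d))]
  ring

lemma constantCoeff_compLeftInv (g : PowerSeries K) : constantCoeff (compLeftInv g) = 0 := by
  rw [← coeff_zero_eq_constantCoeff_apply, compLeftInv, coeff_mk, compLeftInvCoeff]
  simp

lemma coeff_one_compLeftInv (g : PowerSeries K) : coeff 1 (compLeftInv g) = 1 := by
  have h0 : compLeftInvCoeff g 0 = 0 := by
    rw [compLeftInvCoeff]; simp
  rw [compLeftInv, coeff_mk, compLeftInvCoeff]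
  simp [h0]

lemma RiordanElem.exists_mul_eq_one (a : RiordanElem K) : ∃ b : RiordanElem K, a * b = 1 := by
  have ha : constantCoeff a.h = ((1 : Kˣ) : K) := by rw [a.h_zero, Units.val_one]
  refine ⟨⟨comp (invOfUnit a.h 1) (compLeftInv a.g), compLeftInv a.g, ?_,
    constantCoeff_compLeftInv _, coeff_one_compLeftInv _⟩, ?_⟩
  · rw [constantCoeff_comp, constantCoeff_invOfUnit, inv_one, Units.val_one]
  · ext1
    · show a.h * comp (comp _ _) a.g = 1
      rw [comp_assoc (constantCoeff_compLeftInv _) a.g_zero, compLeftInv_comp a.g_zero a.g_one,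
        comp_X, mul_invOfUnit _ _ ha]
    · exact compLeftInv_comp a.g_zero a.g_one

instance : IsDedekindFiniteMonoid (RiordanElem K) :=
  .of_exists_self_mul_eq_one _ fun _ b _ => b.exists_mul_eq_one

lemma RiordanElem.isUnit (a : RiordanElem K) : IsUnit a :=
  let ⟨b, hab⟩ := a.exists_mul_eq_one
  .of_mul_eq_one b hab

lemma coeff_X_add_X_pow_pow {m : ℕ} (hm : 0 < m) :
    coeff ((m + 1) * (m + 1)) ((X + X ^ (m + 1) : PowerSeries K) ^ (m + 1)) = 1 := by
  nontriviality K
  have hdeg : (Polynomial.X : Polynomial K).degree < ↑(m + 1) := by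
    rw [Polynomial.degree_X]; exact_mod_cast (by omega : 1 < m + 1)
  have hmonic := Polynomial.monic_X_pow_add hdeg
  have hcoe : (X + X ^ (m + 1) : PowerSeries K) ^ (m + 1)
      = ((Polynomial.X ^ (m + 1) + Polynomial.X) ^ (m + 1) : Polynomial K) := by
    rw [Polynomial.coe_pow, Polynomial.coe_add, Polynomial.coe_pow, Polynomial.coe_X, add_comm]
  rw [hcoe, Polynomial.coeff_coe, ← (hmonic.pow (m + 1)).coeff_natDegree, hmonic.natDegree_pow,
    Polynomial.natDegree_add_eq_left_of_degree_lt (by rwa [Polynomial.degree_X_pow]),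
    Polynomial.natDegree_X_pow]

lemma coeff_comp_self_X_add_X_pow {m : ℕ} (hm : 0 < m) :
    coeff ((m + 1) * (m + 1))
      (comp (X + X ^ (m + 1)) (X + X ^ (m + 1) : PowerSeries K)) = 1 := by
  have hg : constantCoeff (X + X ^ (m + 1) : PowerSeries K) = 0 := by simp
  have hne1 : (m + 1) * (m + 1) ≠ 1 := by nlinarith
  have hne2 : (m + 1) * (m + 1) ≠ m + 1 := by nlinarith
  rw [add_comp, X_comp hg, X_pow_comp hg, map_add, coeff_X_add_X_pow_pow hm, map_add, coeff_X,
    coeff_X_pow, if_neg hne1, if_neg hne2, zero_add, zero_add]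

lemma IsAdmissible.mul_add_two_mem {p : ℕ} [Fact (1 < p)] {I J : Set ℕ}
    (hadm : IsAdmissible p I J) {m : ℕ} (hm : 0 < m) (hmJ : m ∈ J) : m * (m + 2) ∈ J := by
  obtain ⟨S, hS⟩ := hadm
  let a : RiordanElem (ZMod p) := ⟨1, X + X ^ (m + 1), map_one _, by simp, by simp [hm.ne']⟩
  obtain ⟨u, hu⟩ := a.isUnit
  have huS : u ∈ S := by
    rw [← SetLike.mem_coe, hS]
    refine ⟨fun i hi _ => ?_, fun j hj hjJ => ?_⟩
    · simp [hu, a, coeff_one, hi.ne']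
    · have hjm : j ≠ m := fun h => hjJ (h ▸ hmJ)
      simp [hu, a, coeff_X, coeff_X_pow, hj.ne', hjm]
  have hsq := S.mul_mem huS huS
  rw [← SetLike.mem_coe, hS] at hsq
  by_contra hnot
  have := hsq.2 (m * (m + 2)) (by positivity) hnot
  rw [Units.val_mul, hu, RiordanElem.mul_g, show m * (m + 2) + 1 = (m + 1) * (m + 1) by ring,
    coeff_comp_self_X_add_X_pow hm] at this
  exact one_ne_zero this

theorem admissible_J_infinite_general (p : ℕ) (hp : p.Prime) (I J : Set ℕ)
    (hJ : 0 ∉ J) (hadm : IsAdmissible p I J) (hne : J.Nonempty) :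
    J.Infinite := by
  have : Fact (1 < p) := ⟨hp.one_lt⟩
  intro hfin
  obtain ⟨m, hmJ, hmax⟩ := Set.exists_max_image J (fun j => j) hfin hne
  have hm : 0 < m := Nat.pos_of_ne_zero fun h => hJ (h ▸ hmJ)
  have := hmax _ (hadm.mul_add_two_mem hm hmJ)
  nlinarith

/-- if `(I, J)` is an admissible index-pair and `J` is nonempty, then `J`
is infinite. -/
theorem admissible_J_infinite (p : ℕ) (hp : p.Prime) (I J : Set ℕ)
    (hI : 0 ∉ I) (hJ : 0 ∉ J) (hadm : IsAdmissible p I J) (hne : J.Nonempty) :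
    J.Infinite :=
  admissible_J_infinite_general p hp I J hJ hadm hne

end RiordanPaper
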